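/- Let J: ℝ^m × ℝ^m → ℝ be a nonnegative measurable function, Z an m-dimensional standard Gaussian vector, Z_G an m-dimensional Gaussian with variance σ_G² ≥ 1 per coordinate, X₀ independent of both, and S = {z : ‖z‖² ≤ mL²σ_G²}. Then E[J(X₀, Z)] ≥ σ_G^m e^{−mL²(σ_G²−1)/2} · E[J(X₀, Z_G) | Z_G ∈ S] · Pr(Z_G ∈ S). -/

import Mathlib

/-! On the ball `‖z‖² ≤ K σ²` the density of `N(0, σ² I_m)`, multiplied by
`σ^m e^{-K(σ²-1)/2}`, stays below the standard Gaussian density. Hence the restricted law of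
`Z_G`, rescaled by that constant, is dominated by the law of `Z`; by independence the same holds
for the joint laws of `(X₀, Z_G)` and `(X₀, Z)`, and integrating the nonnegative `J` against
both gives the inequality. -/

open MeasureTheory ProbabilityTheory Real

/-- The `m`-dimensional Gaussian measure with i.i.d. `N(0, σ²)` coordinates,
defined via its density with respect to Lebesgue measure. -/
noncomputable def gaussianVec (m : ℕ) (σ : ℝ) : Measure (EuclideanSpace ℝ (Fin m)) :=
  volume.withDensity
    (fun z => ENNReal.ofReal ((2 * π * σ ^ 2) ^ (-(m : ℝ) / 2)
      * Real.exp (-‖z‖ ^ 2 / (2 * σ ^ 2))))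

lemma neg_div_two_add_neg_div_le {s t K : ℝ} (hs : 1 ≤ s) (ht : t ≤ K * s) :
    -(K * (s - 1)) / 2 + -t / (2 * s) ≤ -t / 2 := by
  have hs0 : 0 < s := by linarith
  have htK : t / s ≤ K := (div_le_iff₀ hs0).mpr ht
  have hgap : -t / 2 - (-(K * (s - 1)) / 2 + -t / (2 * s)) = (s - 1) * (K - t / s) / 2 := by
    field_simp
    ring
  have hgap_nonneg : 0 ≤ (s - 1) * (K - t / s) / 2 := by
    apply div_nonneg (mul_nonneg _ _) two_pos.le <;> linarith
  linarith

lemma pow_mul_gaussian_normalizer {σ : ℝ} (hσ : 0 < σ) (m : ℕ) :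
    σ ^ m * (2 * π * σ ^ 2) ^ (-(m : ℝ) / 2) = (2 * π * 1 ^ 2) ^ (-(m : ℝ) / 2) := by
  rw [one_pow, mul_one, mul_rpow (by positivity) (by positivity), ← rpow_natCast σ 2,
    ← rpow_mul hσ.le, mul_left_comm, ← rpow_natCast σ m, ← rpow_add hσ,
    show (m : ℝ) + (2 : ℕ) * (-(m : ℝ) / 2) = 0 by push_cast; ring, rpow_zero, mul_one]

lemma gaussian_density_mul_le {σ K r : ℝ} (hσ : 1 ≤ σ) (hr : r ^ 2 ≤ K * σ ^ 2) (m : ℕ) :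
    σ ^ m * exp (-(K * (σ ^ 2 - 1)) / 2)
        * ((2 * π * σ ^ 2) ^ (-(m : ℝ) / 2) * exp (-r ^ 2 / (2 * σ ^ 2)))
      ≤ (2 * π * 1 ^ 2) ^ (-(m : ℝ) / 2) * exp (-r ^ 2 / (2 * 1 ^ 2)) := by
  have hexp : exp (-(K * (σ ^ 2 - 1)) / 2) * exp (-r ^ 2 / (2 * σ ^ 2))
      ≤ exp (-r ^ 2 / (2 * 1 ^ 2)) := by
    rw [← exp_add, one_pow, mul_one, exp_le_exp]
    exact neg_div_two_add_neg_div_le (one_le_pow₀ hσ) hr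
  calc σ ^ m * exp (-(K * (σ ^ 2 - 1)) / 2)
          * ((2 * π * σ ^ 2) ^ (-(m : ℝ) / 2) * exp (-r ^ 2 / (2 * σ ^ 2)))
        = σ ^ m * (2 * π * σ ^ 2) ^ (-(m : ℝ) / 2)
          * (exp (-(K * (σ ^ 2 - 1)) / 2) * exp (-r ^ 2 / (2 * σ ^ 2))) := by ring
    _ ≤ (2 * π * 1 ^ 2) ^ (-(m : ℝ) / 2) * exp (-r ^ 2 / (2 * 1 ^ 2)) := by
        rw [pow_mul_gaussian_normalizer (by linarith) m]
        gcongr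

lemma smul_restrict_gaussianVec_le (m : ℕ) {σ : ℝ} (K : ℝ) (hσ : 1 ≤ σ) :
    ENNReal.ofReal (σ ^ m * exp (-(K * (σ ^ 2 - 1)) / 2))
        • (gaussianVec m σ).restrict {z | ‖z‖ ^ 2 ≤ K * σ ^ 2}
      ≤ gaussianVec m 1 := by
  have hS : MeasurableSet {z : EuclideanSpace ℝ (Fin m) | ‖z‖ ^ 2 ≤ K * σ ^ 2} :=
    measurableSet_le (by fun_prop) measurable_const
  unfold gaussianVec
  rw [restrict_withDensity hS, ← withDensity_smul' _ _ ENNReal.ofReal_ne_top,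
    ← withDensity_indicator hS]
  refine withDensity_mono (Filter.Eventually.of_forall fun z => ?_)
  by_cases hz : z ∈ {z : EuclideanSpace ℝ (Fin m) | ‖z‖ ^ 2 ≤ K * σ ^ 2}
  · rw [Set.indicator_of_mem hz, Pi.smul_apply, smul_eq_mul,
      ← ENNReal.ofReal_mul (by positivity)]
    exact ENNReal.ofReal_le_ofReal (gaussian_density_mul_le hσ hz m)
  · rw [Set.indicator_of_notMem hz]
    exact zero_le

section ChangeOfMeasure

variable {Ω E F : Type*} [MeasurableSpace Ω] [MeasurableSpace E] [MeasurableSpace F]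
  {μ : Measure Ω} [IsFiniteMeasure μ] {X : Ω → E} {Y : Ω → F}

lemma ProbabilityTheory.IndepFun.integral_comp_eq_integral_prod
    (hX : Measurable X) (hY : Measurable Y) (hXY : IndepFun X Y μ)
    {g : E × F → ℝ} (hg : Measurable g) :
    ∫ ω, g (X ω, Y ω) ∂μ = ∫ p, g p ∂(μ.map X).prod (μ.map Y) := by
  rw [← (indepFun_iff_map_prod_eq_prod_map_map hX.aemeasurable hY.aemeasurable).mp hXY,
    integral_map (hX.prodMk hY).aemeasurable hg.aestronglyMeasurable]

lemma ProbabilityTheory.IndepFun.integrable_prod_of_integrable_comp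
    (hX : Measurable X) (hY : Measurable Y) (hXY : IndepFun X Y μ)
    {g : E × F → ℝ} (hg : Measurable g)
    (hint : Integrable (fun ω => g (X ω, Y ω)) μ) :
    Integrable g ((μ.map X).prod (μ.map Y)) := by
  rw [← (indepFun_iff_map_prod_eq_prod_map_map hX.aemeasurable hY.aemeasurable).mp hXY]
  exact (integrable_map_measure hg.aestronglyMeasurable (hX.prodMk hY).aemeasurable).mpr hint

theorem mul_integral_indicator_le_of_smul_restrict_map_le {Y' : Ω → F}
    (hX : Measurable X) (hY : Measurable Y) (hY' : Measurable Y')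
    (hXY : IndepFun X Y μ) (hXY' : IndepFun X Y' μ)
    {f : E → F → ℝ} (hf : Measurable (Function.uncurry f)) (hf0 : ∀ x y, 0 ≤ f x y)
    (hint : Integrable (fun ω => f (X ω) (Y ω)) μ)
    {S : Set F} (hS : MeasurableSet S) {c : ℝ} (hc : 0 ≤ c)
    (hle : ENNReal.ofReal c • (μ.map Y').restrict S ≤ μ.map Y) :
    c * ∫ ω, S.indicator (f (X ω)) (Y' ω) ∂μ ≤ ∫ ω, f (X ω) (Y ω) ∂μ := by
  have hindicator : ∀ ω, S.indicator (f (X ω)) (Y' ω)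
      = (Set.univ ×ˢ S).indicator (Function.uncurry f) (X ω, Y' ω) := fun ω => by
    by_cases h : Y' ω ∈ S <;> simp [Set.indicator, h]
  have hrestrict : ∫ ω, S.indicator (f (X ω)) (Y' ω) ∂μ
      = ∫ p, Function.uncurry f p ∂(μ.map X).prod ((μ.map Y').restrict S) := by
    simp_rw [hindicator]
    rw [hXY'.integral_comp_eq_integral_prod hX hY' (hf.indicator (MeasurableSet.univ.prod hS)),
      integral_indicator (MeasurableSet.univ.prod hS), ← Measure.prod_restrict,
      Measure.restrict_univ]
  calc c * ∫ ω, S.indicator (f (X ω)) (Y' ω) ∂μ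
        = ∫ p, Function.uncurry f p
            ∂(ENNReal.ofReal c • (μ.map X).prod ((μ.map Y').restrict S)) := by
        rw [integral_smul_measure, ENNReal.toReal_ofReal hc, smul_eq_mul, hrestrict]
    _ ≤ ∫ p, Function.uncurry f p ∂(μ.map X).prod (μ.map Y) := by
        refine integral_mono_measure ?_ (ae_of_all _ fun p => hf0 p.1 p.2)
          (hXY.integrable_prod_of_integrable_comp hX hY hf hint)
        rw [← Measure.prod_smul_right]
        exact Measure.prod_mono le_rfl hle
    _ = ∫ ω, f (X ω) (Y ω) ∂μ := (hXY.integral_comp_eq_integral_prod hX hY hf).symm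

end ChangeOfMeasure

theorem stmt_8_general {Ω : Type*} [MeasurableSpace Ω] (μ : Measure Ω) [IsProbabilityMeasure μ]
    (m : ℕ) (σ L : ℝ) (hσ : 1 ≤ σ)
    (J : EuclideanSpace ℝ (Fin m) → EuclideanSpace ℝ (Fin m) → ℝ)
    (hJmeas : Measurable (Function.uncurry J)) (hJnonneg : ∀ x z, 0 ≤ J x z)
    (X₀ Z ZG : Ω → EuclideanSpace ℝ (Fin m))
    (hX₀ : Measurable X₀) (hZ : Measurable Z) (hZG : Measurable ZG)
    (hZlaw : Measure.map Z μ = gaussianVec m 1)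
    (hZGlaw : Measure.map ZG μ = gaussianVec m σ)
    (hindZ : IndepFun X₀ Z μ) (hindZG : IndepFun X₀ ZG μ)
    (hint : Integrable (fun ω => J (X₀ ω) (Z ω)) μ) :
    ∫ ω, J (X₀ ω) (Z ω) ∂μ
      ≥ σ ^ m * Real.exp (-(m * L ^ 2 * (σ ^ 2 - 1)) / 2)
        * ∫ ω, Set.indicator {z : EuclideanSpace ℝ (Fin m) | ‖z‖ ^ 2 ≤ m * L ^ 2 * σ ^ 2}
            (fun z => J (X₀ ω) z) (ZG ω) ∂μ := by
  have hS : MeasurableSet {z : EuclideanSpace ℝ (Fin m) | ‖z‖ ^ 2 ≤ m * L ^ 2 * σ ^ 2} :=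
    measurableSet_le (by fun_prop) measurable_const
  refine mul_integral_indicator_le_of_smul_restrict_map_le hX₀ hZ hZG hindZ hindZG hJmeas
    hJnonneg hint hS (by positivity) ?_
  rw [hZlaw, hZGlaw]
  exact smul_restrict_gaussianVec_le m (m * L ^ 2) hσ

theorem stmt_8 {Ω : Type*} [MeasurableSpace Ω] (μ : Measure Ω) [IsProbabilityMeasure μ]
    (m : ℕ) (hm : 1 ≤ m) (σ L : ℝ) (hσ : 1 ≤ σ) (hL : 0 < L)
    (J : EuclideanSpace ℝ (Fin m) → EuclideanSpace ℝ (Fin m) → ℝ)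
    (hJmeas : Measurable (Function.uncurry J)) (hJnonneg : ∀ x z, 0 ≤ J x z)
    (X₀ Z ZG : Ω → EuclideanSpace ℝ (Fin m))
    (hX₀ : Measurable X₀) (hZ : Measurable Z) (hZG : Measurable ZG)
    (hZlaw : Measure.map Z μ = gaussianVec m 1)
    (hZGlaw : Measure.map ZG μ = gaussianVec m σ)
    (hindZ : IndepFun X₀ Z μ) (hindZG : IndepFun X₀ ZG μ)
    (hint : Integrable (fun ω => J (X₀ ω) (Z ω)) μ)
    (hintG : Integrable (fun ω => J (X₀ ω) (ZG ω)) μ) :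
    ∫ ω, J (X₀ ω) (Z ω) ∂μ
      ≥ σ ^ m * Real.exp (-(m * L ^ 2 * (σ ^ 2 - 1)) / 2)
        * ∫ ω, Set.indicator {z : EuclideanSpace ℝ (Fin m) | ‖z‖ ^ 2 ≤ m * L ^ 2 * σ ^ 2}
            (fun z => J (X₀ ω) z) (ZG ω) ∂μ :=
  stmt_8_general μ m σ L hσ J hJmeas hJnonneg X₀ Z ZG hX₀ hZ hZG hZlaw hZGlaw hindZ hindZG hint
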